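/- arXiv:2108.11090 — 2 statements merged into one kernel-verified Lean document; each statement's English description precedes it below -/
import Mathlib

section
/- For every nonzero real number λ and every n ≥ 0, the degenerate Bernoulli polynomials satisfy β_{n,λ}(x) = Σ_{k=0}^{n} { Σ_{l=0}^{n} C(n,l) β_{n−l,λ} S_{1,λ}(l,k) } φ_{k,λ}(x) as polynomials in x, where C(n,l) is the binomial coefficient. -/
open Nat PowerSeries Finset

noncomputable section

/-- λ-falling factorial (x)_{n,λ} = x(x−λ)···(x−(n−1)λ). -/
def dfall (l x : ℝ) (n : ℕ) : ℝ := ∏ i ∈ range n, (x - i * l)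

/-- degenerate exponential e_λ^x(t) = Σ (x)_{n,λ} t^n/n! as a formal power series. -/
def degExp (l x : ℝ) : PowerSeries ℝ := PowerSeries.mk fun n => dfall l x n / n !

/-- degenerate logarithm log_λ(1+t) = Σ_{n≥1} (∏_{j=1}^{n−1}(λ−j)) t^n/n!. -/
def degLog (l : ℝ) : PowerSeries ℝ :=
  PowerSeries.mk fun n => if n = 0 then 0 else (∏ j ∈ range (n - 1), (l - (j + 1))) / n !

/-- composition Σ_k a_k f^k, valid when f has zero constant term. -/
def psComp (a : ℕ → ℝ) (f : PowerSeries ℝ) : PowerSeries ℝ :=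
  PowerSeries.mk fun n => ∑ k ∈ range (n + 1), a k * PowerSeries.coeff (R := ℝ) n (f ^ k)

/-- e_λ^x(f), the degenerate exponential composed with f (f with zero constant term). -/
def degExpComp (l x : ℝ) (f : PowerSeries ℝ) : PowerSeries ℝ :=
  psComp (fun k => dfall l x k / k !) f

/-- degenerate Stirling numbers of the second kind. -/
def dS2 (l : ℝ) (n k : ℕ) : ℝ :=
  (n ! : ℝ) / k ! * PowerSeries.coeff (R := ℝ) n ((degExp l 1 - 1) ^ k)

/-- degenerate Stirling numbers of the first kind. -/
def dS1 (l : ℝ) (n k : ℕ) : ℝ :=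
  (n ! : ℝ) / k ! * PowerSeries.coeff (R := ℝ) n (degLog l ^ k)

/-- (signed) Stirling numbers of the first kind: coefficients of x(x-1)···(x-n+1). -/
def sS1 (n k : ℕ) : ℝ := (descPochhammer ℝ n).coeff k

/-- fully degenerate Bell polynomial φ_{n,λ}(x). -/
def dBell (l : ℝ) (n : ℕ) (x : ℝ) : ℝ := ∑ k ∈ range (n + 1), dS2 l n k * dfall l x k

/-- degenerate Whitney numbers of the second kind. -/
def dW (m : ℕ) (l : ℝ) (n k : ℕ) : ℝ :=
  (n ! : ℝ) / k ! *
    PowerSeries.coeff (R := ℝ) n (degExp l 1 * ((degExp l (m : ℝ) - 1) * PowerSeries.C (R := ℝ) (1 / m)) ^ k)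

/-- fully degenerate Dowling polynomial d_{m,λ}(n,x). -/
def dDowling (m : ℕ) (l : ℝ) (n : ℕ) (x : ℝ) : ℝ :=
  ∑ k ∈ range (n + 1), dW m l n k * dfall l x k

/-- division of a power series by t (coefficient shift). -/
def divT (f : PowerSeries ℝ) : PowerSeries ℝ :=
  PowerSeries.mk fun n => PowerSeries.coeff (R := ℝ) (n + 1) f

/-- degenerate Bernoulli polynomials β_{n,λ}(x): (t/(e_λ(t)−1)) e_λ^x(t) = Σ β_{n,λ}(x) tⁿ/n!. -/
def dBernoulliPoly (l : ℝ) (n : ℕ) (x : ℝ) : ℝ :=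
  (n ! : ℝ) * PowerSeries.coeff (R := ℝ) n ((divT (degExp l 1 - 1))⁻¹ * degExp l x)

/-- the λ-falling factorial polynomial (x)_{k,λ}. -/
def dfallPoly (l : ℝ) (k : ℕ) : Polynomial ℝ :=
  ∏ i ∈ range k, (Polynomial.X - Polynomial.C (i * l))

/-- degenerate poly-Bell polynomials B^{(r)}_{n,λ}(x). -/
def dPolyBell (r : ℤ) (l : ℝ) (n : ℕ) (x : ℝ) : ℝ :=
  (n ! : ℝ) * PowerSeries.coeff (R := ℝ) n
    (divT (psComp (fun k => if k = 0 then 0 else dfall l 1 k / ((k - 1)! * (k : ℝ) ^ r))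
        (degLog l)) *
      (divT (degExp l 1 - 1))⁻¹ * degExp l x)

/-- degenerate Bernoulli polynomials of the second kind b_{n,λ}(x). -/
def dBern2 (l : ℝ) (n : ℕ) (x : ℝ) : ℝ :=
  (n ! : ℝ) *
    PowerSeries.coeff (R := ℝ) n ((divT (degLog l))⁻¹ * PowerSeries.mk fun j => dfall 1 x j / j !)

/-!
Expanding the product `(t / (e_λ(t) - 1)) · e_λ^x(t)` gives
`β_{n,λ}(x) = ∑_j C(n,j) β_{n-j,λ} (x)_{j,λ}`, so it suffices to invert the fully degenerate
Bell polynomials: `∑_k S_{1,λ}(j,k) φ_{k,λ}(x) = (x)_{j,λ}`. This is the orthogonality of the two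
kinds of degenerate Stirling numbers, i.e. `e_λ(log_λ(1+t)) = 1 + t`, which holds because both
sides solve `(1+t) y' = y, y(0) = 1`: indeed `(1+λt) e_λ'(t) = e_λ(t)` and
`(1+t) log_λ'(1+t) = 1 + λ log_λ(1+t)`.
-/

namespace PowerSeries

theorem coeff_pow_eq_zero_of_lt {R : Type*} [CommRing R] {f : R⟦X⟧} (hf : constantCoeff f = 0)
    {n k : ℕ} (h : n < k) : coeff n (f ^ k) = 0 :=
  X_pow_dvd_iff.1 (pow_dvd_pow_of_dvd (X_dvd_iff.2 hf) k) n h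

theorem coeff_subst_eq_sum_range {R : Type*} [CommRing R] (f : R⟦X⟧) {g : R⟦X⟧}
    (hg : constantCoeff g = 0) {n N : ℕ} (hN : n < N) :
    coeff n (f.subst g) = ∑ k ∈ range N, coeff k f * coeff n (g ^ k) := by
  rw [coeff_subst' (HasSubst.of_constantCoeff_zero' hg)]
  refine finsum_eq_sum_of_support_subset _ fun k hk => ?_
  by_contra hkN
  simp only [Function.mem_support, coe_range, Set.mem_Iio, not_lt] at hk hkN
  exact hk (by rw [coeff_pow_eq_zero_of_lt hg (by omega), smul_zero])

theorem coeff_one_add_C_mul_X_mul_derivative {R : Type*} [CommRing R] (a : R) (f : R⟦X⟧)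
    (n : ℕ) :
    coeff n ((1 + C a * X) * d⁄dX R f) = (n + 1) * coeff (n + 1) f + a * n * coeff n f := by
  rw [add_mul, one_mul, map_add, mul_assoc, coeff_C_mul]
  cases n with
  | zero => simp [coeff_derivative]
  | succ m =>
    rw [coeff_succ_X_mul, coeff_derivative, coeff_derivative]
    push_cast
    ring

theorem eq_of_one_add_C_mul_X_mul_derivative_eq {K : Type*} [Field K] [CharZero K] {a b : K}
    {f g : K⟦X⟧} (hf : (1 + C a * X) * d⁄dX K f = C b * f)
    (hg : (1 + C a * X) * d⁄dX K g = C b * g) (h0 : constantCoeff f = constantCoeff g) :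
    f = g := by
  ext n
  induction n with
  | zero => simpa using h0
  | succ n ih =>
    have ef := congrArg (coeff n) hf
    have eg := congrArg (coeff n) hg
    rw [coeff_one_add_C_mul_X_mul_derivative, coeff_C_mul] at ef eg
    apply mul_left_cancel₀ (Nat.cast_add_one_ne_zero n : (n : K) + 1 ≠ 0)
    linear_combination ef - eg + (b - a * n) * ih

end PowerSeries

@[simp]
lemma coeff_degExp (l x : ℝ) (n : ℕ) : coeff n (degExp l x) = dfall l x n / n ! := by
  simp [degExp]

lemma constantCoeff_degExp (l x : ℝ) : constantCoeff (degExp l x) = 1 := by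
  simp [← coeff_zero_eq_constantCoeff_apply, dfall]

lemma constantCoeff_degLog (l : ℝ) : constantCoeff (degLog l) = 0 := by
  simp [← coeff_zero_eq_constantCoeff_apply, degLog]

lemma degExp_zero (l : ℝ) : degExp l 0 = 1 := by
  ext (_ | n)
  · simp [dfall]
  · simp [dfall, coeff_one, prod_range_succ']

lemma one_add_C_mul_X_mul_derivative_degExp (l x : ℝ) :
    (1 + C l * X) * d⁄dX ℝ (degExp l x) = C x * degExp l x := by
  ext n
  rw [coeff_one_add_C_mul_X_mul_derivative, coeff_C_mul, coeff_degExp, coeff_degExp,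
    dfall, prod_range_succ, ← dfall, Nat.factorial_succ]
  push_cast
  field_simp
  ring

lemma coeff_succ_degLog (l : ℝ) (n : ℕ) :
    coeff (n + 1) (degLog l) = (∏ j ∈ range n, (l - (j + 1))) / (n + 1)! := by
  simp [degLog]

lemma one_add_X_mul_derivative_degLog (l : ℝ) :
    (1 + X) * d⁄dX ℝ (degLog l) = 1 + C l * degLog l := by
  ext n
  have h := coeff_one_add_C_mul_X_mul_derivative 1 (degLog l) n
  rw [map_one, one_mul, one_mul] at h
  rw [h, map_add, coeff_C_mul, coeff_one]
  rcases n with _ | n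
  · simp [degLog]
  · rw [coeff_succ_degLog, coeff_succ_degLog, prod_range_succ, Nat.factorial_succ (n + 1)]
    push_cast
    field_simp
    ring

lemma degExp_subst_degLog (l : ℝ) : (degExp l 1).subst (degLog l) = 1 + X := by
  have hG := HasSubst.of_constantCoeff_zero' (constantCoeff_degLog l)
  have hsubst : (1 + C l * X).subst (degLog l) = 1 + C l * degLog l := by
    rw [subst_add hG, subst_mul hG, subst_X hG, ← map_one C, subst_C, subst_C]
    rfl
  apply eq_of_one_add_C_mul_X_mul_derivative_eq (a := 1) (b := 1)
  · rw [derivative_subst hG, map_one, one_mul, one_mul]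
    calc (1 + X) * ((d⁄dX ℝ (degExp l 1)).subst (degLog l) * d⁄dX ℝ (degLog l))
        = (d⁄dX ℝ (degExp l 1)).subst (degLog l) * (1 + C l * degLog l) := by
          rw [← one_add_X_mul_derivative_degLog]; ring
      _ = ((1 + C l * X) * d⁄dX ℝ (degExp l 1)).subst (degLog l) := by
          rw [subst_mul hG, hsubst, mul_comm]
      _ = (degExp l 1).subst (degLog l) := by
          rw [one_add_C_mul_X_mul_derivative_degExp, map_one, one_mul]
  · simp
  · rw [← coeff_zero_eq_constantCoeff_apply, coeff_subst_eq_sum_range _ (constantCoeff_degLog l)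
      zero_lt_one]
    simp [dfall]

lemma sum_coeff_degLog_pow_mul_coeff_pow (l : ℝ) {j N : ℕ} (hj : j < N) (m : ℕ) :
    ∑ k ∈ range N, coeff j (degLog l ^ k) * coeff k ((degExp l 1 - 1) ^ m) =
      if j = m then 1 else 0 := by
  have hG := HasSubst.of_constantCoeff_zero' (constantCoeff_degLog l)
  have h : ((degExp l 1 - 1) ^ m).subst (degLog l) = X ^ m := by
    rw [subst_pow hG, subst_sub hG, degExp_subst_degLog, ← map_one C, subst_C, map_one, map_one,
      add_sub_cancel_left]
  rw [← coeff_X_pow, ← h, coeff_subst_eq_sum_range _ (constantCoeff_degLog l) hj]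
  simp_rw [mul_comm]

lemma dS2_eq_zero_of_lt (l : ℝ) {n k : ℕ} (h : n < k) : dS2 l n k = 0 := by
  have hF : constantCoeff (degExp l 1 - 1) = 0 := by simp [constantCoeff_degExp]
  rw [dS2, coeff_pow_eq_zero_of_lt hF h, mul_zero]

lemma sum_dS1_mul_dS2 (l : ℝ) {j N : ℕ} (hj : j < N) (m : ℕ) :
    ∑ k ∈ range N, dS1 l j k * dS2 l k m = if j = m then 1 else 0 := by
  have hfact (k : ℕ) : (k ! : ℝ) ≠ 0 := by positivity
  calc ∑ k ∈ range N, dS1 l j k * dS2 l k m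
      = j ! / m ! * ∑ k ∈ range N, coeff j (degLog l ^ k) * coeff k ((degExp l 1 - 1) ^ m) := by
        rw [mul_sum]
        refine sum_congr rfl fun k _ => ?_
        rw [dS1, dS2]
        field_simp
    _ = if j = m then 1 else 0 := by
        rw [sum_coeff_degLog_pow_mul_coeff_pow l hj]
        split_ifs with h
        · rw [h, div_self (hfact m), mul_one]
        · rw [mul_zero]

lemma dBell_eq_sum_range (l x : ℝ) {k N : ℕ} (hk : k < N) :
    dBell l k x = ∑ m ∈ range N, dS2 l k m * dfall l x m := by
  refine sum_subset (range_subset_range.2 hk) fun m _ hm => ?_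
  rw [dS2_eq_zero_of_lt l (by simpa using hm), zero_mul]

lemma sum_dS1_mul_dBell (l x : ℝ) {j N : ℕ} (hj : j < N) :
    ∑ k ∈ range N, dS1 l j k * dBell l k x = dfall l x j := by
  calc ∑ k ∈ range N, dS1 l j k * dBell l k x
      = ∑ m ∈ range N, (∑ k ∈ range N, dS1 l j k * dS2 l k m) * dfall l x m := by
        simp_rw [sum_mul, mul_assoc]
        rw [sum_comm]
        refine sum_congr rfl fun k hk => ?_
        rw [dBell_eq_sum_range l x (mem_range.1 hk), mul_sum]
    _ = dfall l x j := by
        simp_rw [sum_dS1_mul_dS2 l hj, ite_mul, one_mul, zero_mul]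
        rw [sum_ite_eq, if_pos (mem_range.2 hj)]

lemma dBernoulliPoly_eq_sum_choose (l x : ℝ) (n : ℕ) :
    dBernoulliPoly l n x =
      ∑ j ∈ range (n + 1), n.choose j * dBernoulliPoly l (n - j) 0 * dfall l x j := by
  rw [dBernoulliPoly, mul_comm _ (degExp l x), coeff_mul, Nat.sum_antidiagonal_eq_sum_range_succ_mk,
    mul_sum]
  refine sum_congr rfl fun j hj => ?_
  have hjn : j ≤ n := Nat.lt_succ_iff.1 (mem_range.1 hj)
  rw [dBernoulliPoly, degExp_zero, mul_one, coeff_degExp,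
    ← Nat.choose_mul_factorial_mul_factorial hjn]
  have hj0 : (j ! : ℝ) ≠ 0 := by positivity
  push_cast
  field_simp

theorem stmt5_general (l : ℝ) (n : ℕ) (x : ℝ) :
    dBernoulliPoly l n x =
      ∑ k ∈ range (n + 1),
        (∑ j ∈ range (n + 1), n.choose j * dBernoulliPoly l (n - j) 0 * dS1 l j k) *
          dBell l k x := by
  calc dBernoulliPoly l n x
      = ∑ j ∈ range (n + 1), n.choose j * dBernoulliPoly l (n - j) 0 *
          ∑ k ∈ range (n + 1), dS1 l j k * dBell l k x := by
        rw [dBernoulliPoly_eq_sum_choose]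
        exact sum_congr rfl fun j hj => by rw [sum_dS1_mul_dBell l x (mem_range.1 hj)]
    _ = _ := by
        simp_rw [mul_sum, sum_mul, mul_assoc]
        exact sum_comm

theorem stmt5 (l : ℝ) (hl : l ≠ 0) (n : ℕ) (x : ℝ) :
    dBernoulliPoly l n x =
      ∑ k ∈ range (n + 1),
        (∑ j ∈ range (n + 1), n.choose j * dBernoulliPoly l (n - j) 0 * dS1 l j k) *
          dBell l k x :=
  stmt5_general l n x
end
end

section
/- Let λ be a nonzero real number, m a positive integer, and p a real polynomial of degree at most n. Then p(x) = Σ_{k=0}^{n} C_k d_{m,λ}(k,x) as polynomials, where C_k = (1/k!) ⟨ (1+mt)^{−1/m} ((1/m) log_{λ/m}(1+mt))^k | p(x) ⟩_λ. -/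
/-!
Write `p = ∑ c_j (x)_{j,λ}` and `d_{m,λ}(k,x) = ∑_i W_{m,λ}(k,i) (x)_{i,λ}`.
The claim becomes the orthogonality `∑_k (j!/k!) [t^j] (F G^k) · W_{m,λ}(k,i) = δ_{ij}`
for `F = (1+mt)^{-1/m}` and `G = (1/m) log_{λ/m}(1+mt)`.
As `W_{m,λ}(k,i) = (k!/i!) [t^k] e_λ(t) H(t)^i` with `H = (e_λ^m(t) - 1)/m`, that sum
is the `j`-th coefficient of `F · (e_λ H^i)(G)`.
All series involved are rescaled binomial series: `e_λ^x(t) = (1+λt)^{x/λ}`,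
`G = ((1+mt)^{λ/m} - 1)/λ`, and `(1+t)^b ∘ ((1+t)^a - 1) = (1+t)^{ab}`.
Hence `e_λ(G) = (1+mt)^{1/m}` and `H(G) = t`, so `F · (e_λ H^i)(G) = t^i`.
-/

open Nat PowerSeries Finset

noncomputable section

theorem Finset.sum_sum_mul_sum_eq_of_orthogonal {ι R : Type*} [CommSemiring R] [DecidableEq ι]
    (s : Finset ι) (A B : ι → ι → R) (c v : ι → R)
    (h : ∀ j ∈ s, ∀ i, ∑ k ∈ s, A j k * B k i = if j = i then 1 else 0) :
    ∑ k ∈ s, (∑ j ∈ s, A j k * c j) * (∑ i ∈ s, B k i * v i) = ∑ j ∈ s, c j * v j := by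
  calc _ = ∑ j ∈ s, ∑ i ∈ s, ∑ k ∈ s, A j k * c j * (B k i * v i) := by
        simp_rw [sum_mul_sum]
        rw [sum_comm]
        exact sum_congr rfl fun j _ => sum_comm
    _ = ∑ j ∈ s, ∑ i ∈ s, c j * v i * ∑ k ∈ s, A j k * B k i := by
        refine sum_congr rfl fun j _ => sum_congr rfl fun i _ => ?_
        rw [mul_sum]
        exact sum_congr rfl fun k _ => by ring
    _ = ∑ j ∈ s, c j * v j := by
        refine sum_congr rfl fun j hj => ?_
        simp only [h j hj, mul_ite, mul_one, mul_zero, sum_ite_eq, if_pos hj]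

namespace PowerSeries

section Subst

variable {R : Type*} [CommRing R]

theorem coeff_mul_pow_eq_zero_of_lt {g : R⟦X⟧} (hg : constantCoeff g = 0) (f : R⟦X⟧)
    {j k : ℕ} (h : j < k) : coeff j (f * g ^ k) = 0 :=
  X_pow_dvd_iff.mp ((pow_dvd_pow_of_dvd (X_dvd_iff.mpr hg) k).mul_left f) j h

theorem coeff_subst_eq_sum {g : R⟦X⟧} (hg : constantCoeff g = 0) (f : R⟦X⟧) {j n : ℕ}
    (hj : j ≤ n) :
    coeff j (f.subst g) = ∑ k ∈ range (n + 1), coeff k f * coeff j (g ^ k) := by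
  rw [coeff_subst' (HasSubst.of_constantCoeff_zero' hg)]
  refine finsum_eq_sum_of_support_subset _ fun k hk => mem_range.mpr (by_contra fun hkn => hk ?_)
  simp only [smul_eq_mul]
  rw [← one_mul (g ^ k), coeff_mul_pow_eq_zero_of_lt hg 1 (by omega), mul_zero]

theorem coeff_mul_subst_eq_sum {g : R⟦X⟧} (hg : constantCoeff g = 0) (F f : R⟦X⟧)
    {j n : ℕ} (hj : j ≤ n) :
    coeff j (F * f.subst g) = ∑ k ∈ range (n + 1), coeff k f * coeff j (F * g ^ k) := by
  calc coeff j (F * f.subst g)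
      = ∑ ab ∈ antidiagonal j, ∑ k ∈ range (n + 1),
          coeff k f * (coeff ab.1 F * coeff ab.2 (g ^ k)) := by
        rw [coeff_mul]
        refine sum_congr rfl fun ab hab => ?_
        rw [coeff_subst_eq_sum hg f ((HasAntidiagonal.antidiagonal.snd_le hab).trans hj), mul_sum]
        exact sum_congr rfl fun k _ => by ring
    _ = ∑ k ∈ range (n + 1), coeff k f * coeff j (F * g ^ k) := by
        rw [sum_comm]
        simp only [coeff_mul, mul_sum]

theorem rescale_subst {g : R⟦X⟧} (hg : constantCoeff g = 0) (a : R) (f : R⟦X⟧) :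
    rescale a (f.subst g) = f.subst (rescale a g) := by
  rw [rescale_eq_subst, rescale_eq_subst,
    subst_comp_subst_apply (HasSubst.of_constantCoeff_zero' hg) (HasSubst.smul_X' a)]

theorem subst_rescale {g : R⟦X⟧} (hg : constantCoeff g = 0) (a : R) (f : R⟦X⟧) :
    (rescale a f).subst g = f.subst (C a * g) := by
  have hs := HasSubst.of_constantCoeff_zero' hg
  rw [rescale_eq_subst, subst_comp_subst_apply (HasSubst.smul_X' a) hs, subst_smul hs, subst_X hs,
    smul_eq_C_mul]

end Subst

section Binomial

variable {K : Type*} [Field K] [CharZero K]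

theorem binomialSeries_natCast_mul (N : ℕ) (a : K) :
    binomialSeries K (N * a) = binomialSeries K a ^ N := by
  induction N with
  | zero => simp
  | succ N ih => rw [Nat.cast_succ, add_mul, one_mul, binomialSeries_add, ih, pow_succ]

theorem _root_.Ring.choose_eq_eval_descPochhammer (b : K) (k : ℕ) :
    Ring.choose b k = (k ! : K)⁻¹ * (descPochhammer K k).eval b := by
  rw [Ring.choose_eq_smul, smul_eq_mul, ← Polynomial.aeval_eq_smeval,
    ← descPochhammer_map (algebraMap ℤ K), Polynomial.eval_map_algebraMap]

theorem subst_binomialSeries_sub_one (a b : K) :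
    (binomialSeries K b).subst (binomialSeries K a - 1) = binomialSeries K (a * b) := by
  have hg : constantCoeff (binomialSeries K a - 1) = 0 := by simp
  -- Both sides' `n`-th coefficients are polynomials in `b` that agree at every natural number.
  ext n
  let P : Polynomial K := ∑ k ∈ range (n + 1),
    Polynomial.C (coeff n ((binomialSeries K a - 1) ^ k) * (k ! : K)⁻¹) * descPochhammer K k
  let Q : Polynomial K :=
    Polynomial.C (n ! : K)⁻¹ * (descPochhammer K n).comp (Polynomial.C a * Polynomial.X)
  have hP (y : K) : P.eval y = coeff n ((binomialSeries K y).subst (binomialSeries K a - 1)) := by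
    simp only [P, coeff_subst_eq_sum hg _ le_rfl, Polynomial.eval_finsetSum, Polynomial.eval_mul,
      Polynomial.eval_C, binomialSeries_coeff, smul_eq_mul, mul_one,
      Ring.choose_eq_eval_descPochhammer]
    exact sum_congr rfl fun k _ => by ring
  have hQ (y : K) : Q.eval y = coeff n (binomialSeries K (a * y)) := by
    simp [Q, Ring.choose_eq_eval_descPochhammer]
  have hPQ : P = Q := by
    refine Polynomial.eq_of_infinite_eval_eq P Q (Set.infinite_of_injective_forall_mem
      Nat.cast_injective fun N : ℕ => ?_)
    rw [Set.mem_ofPred_eq, hP, hQ, binomialSeries_nat, mul_comm, binomialSeries_natCast_mul,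
      ← coe_substAlgHom (HasSubst.of_constantCoeff_zero' hg), map_pow, map_add, map_one,
      substAlgHom_X, add_sub_cancel]
  rw [← hP, ← hQ, hPQ]

end Binomial

end PowerSeries

theorem dfall_eq_pow_mul_eval {l : ℝ} (hl : l ≠ 0) (x : ℝ) (n : ℕ) :
    dfall l x n = l ^ n * (descPochhammer ℝ n).eval (x / l) := by
  induction n with
  | zero => simp [dfall]
  | succ n ih =>
    rw [dfall, prod_range_succ, ← dfall, ih, descPochhammer_succ_eval]
    field_simp
    ring

theorem dfall_div_factorial {l : ℝ} (hl : l ≠ 0) (x : ℝ) (n : ℕ) :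
    dfall l x n / n ! = l ^ n * Ring.choose (x / l) n := by
  rw [Ring.choose_eq_eval_descPochhammer, dfall_eq_pow_mul_eval hl]
  ring

theorem degExp_eq_rescale {l : ℝ} (hl : l ≠ 0) (x : ℝ) :
    degExp l x = rescale l (PowerSeries.binomialSeries ℝ (x / l)) := by
  ext n
  rw [degExp, coeff_mk, coeff_rescale, PowerSeries.binomialSeries_coeff, smul_eq_mul, mul_one,
    dfall_div_factorial hl]

theorem mk_dfall_mul_pow_div_eq_rescale (a c : ℝ) :
    (mk fun i => dfall 1 a i * c ^ i / i !) = rescale c (PowerSeries.binomialSeries ℝ a) := by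
  ext i
  rw [coeff_mk, coeff_rescale, PowerSeries.binomialSeries_coeff, smul_eq_mul, mul_one,
    mul_div_right_comm, dfall_div_factorial one_ne_zero, one_pow, one_mul, div_one, mul_comm]

theorem C_mul_degLog (μ : ℝ) : C μ * degLog μ = PowerSeries.binomialSeries ℝ μ - 1 := by
  ext n
  rw [coeff_C_mul, degLog, coeff_mk, map_sub, PowerSeries.binomialSeries_coeff, smul_eq_mul,
    mul_one]
  rcases n with _ | n
  · simp
  · have h := dfall_div_factorial one_ne_zero μ (n + 1)
    rw [one_pow, one_mul, div_one] at h
    rw [if_neg n.succ_ne_zero, coeff_one, if_neg n.succ_ne_zero, sub_zero, ← h, dfall,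
      prod_range_succ', Nat.add_sub_cancel]
    simp only [Nat.cast_add, Nat.cast_one, mul_one]
    ring

theorem dfallPoly_eval (l x : ℝ) (k : ℕ) : (dfallPoly l k).eval x = dfall l x k := by
  simp [dfallPoly, dfall, Polynomial.eval_prod]

section Dowling

/-- `(1/m) log_{λ/m}(1 + m t)`, the compositional inverse of `(e_λ^m(t) - 1)/m`. -/
def scaledDegLog (m : ℕ) (l : ℝ) : PowerSeries ℝ :=
  C (1 / (m : ℝ)) * mk fun i => (m : ℝ) ^ i * coeff i (degLog (l / m))

/-- `(1 + m t)^{-1/m}`. -/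
def invRootSeries (m : ℕ) : PowerSeries ℝ :=
  mk fun i => dfall 1 (-(1 / (m : ℝ))) i * (m : ℝ) ^ i / i !

variable {m : ℕ} {l : ℝ}

theorem C_mul_scaledDegLog (hm : 0 < m) :
    C l * scaledDegLog m l = rescale (m : ℝ) (PowerSeries.binomialSeries ℝ (l / m) - 1) := by
  have hmR : (m : ℝ) ≠ 0 := Nat.cast_ne_zero.mpr hm.ne'
  ext n
  rw [← C_mul_degLog, scaledDegLog, coeff_rescale, coeff_C_mul, coeff_C_mul, coeff_C_mul,
    coeff_mk]
  field_simp

theorem constantCoeff_scaledDegLog : constantCoeff (scaledDegLog m l) = 0 := by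
  simp [scaledDegLog, degLog]

theorem hasSubst_scaledDegLog : HasSubst (scaledDegLog m l) :=
  HasSubst.of_constantCoeff_zero' constantCoeff_scaledDegLog

theorem subst_scaledDegLog_degExp (hl : l ≠ 0) (hm : 0 < m) (x : ℝ) :
    (degExp l x).subst (scaledDegLog m l) =
      rescale (m : ℝ) (PowerSeries.binomialSeries ℝ (x / m)) := by
  rw [degExp_eq_rescale hl, subst_rescale constantCoeff_scaledDegLog, C_mul_scaledDegLog hm,
    ← rescale_subst (by simp), subst_binomialSeries_sub_one,
    mul_comm (l / m), div_mul_div_cancel₀ hl]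

theorem subst_scaledDegLog_whitney (hl : l ≠ 0) (hm : 0 < m) :
    ((degExp l m - 1) * C (1 / (m : ℝ))).subst (scaledDegLog m l) = X := by
  have hmR : (m : ℝ) ≠ 0 := Nat.cast_ne_zero.mpr hm.ne'
  have hB : PowerSeries.binomialSeries ℝ (1 : ℝ) = 1 + X := by
    simpa using PowerSeries.binomialSeries_nat (R := ℝ) (A := ℝ) 1
  rw [mul_comm, ← smul_eq_C_mul, ← coe_substAlgHom hasSubst_scaledDegLog, map_smul,
    map_sub, map_one, coe_substAlgHom, subst_scaledDegLog_degExp hl hm, div_self hmR, hB, map_add,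
    map_one, rescale_X, add_sub_cancel_left, smul_eq_C_mul, ← mul_assoc, ← map_mul,
    one_div_mul_cancel hmR, map_one, one_mul]

theorem invRootSeries_mul_subst_degExp_one (hl : l ≠ 0) (hm : 0 < m) :
    invRootSeries m * (degExp l 1).subst (scaledDegLog m l) = 1 := by
  rw [invRootSeries, mk_dfall_mul_pow_div_eq_rescale, subst_scaledDegLog_degExp hl hm, ← map_mul,
    ← PowerSeries.binomialSeries_add, neg_add_cancel, PowerSeries.binomialSeries_zero, map_one]

theorem invRootSeries_mul_subst_whitney (hl : l ≠ 0) (hm : 0 < m) (i : ℕ) :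
    invRootSeries m * (degExp l 1 * ((degExp l m - 1) * C (1 / (m : ℝ))) ^ i).subst
      (scaledDegLog m l) = X ^ i := by
  rw [subst_mul hasSubst_scaledDegLog, subst_pow hasSubst_scaledDegLog, ← mul_assoc,
    invRootSeries_mul_subst_degExp_one hl hm, subst_scaledDegLog_whitney hl hm, one_mul]

theorem sum_coeff_invRootSeries_mul_coeff_whitney (hl : l ≠ 0) (hm : 0 < m) {n j : ℕ}
    (hj : j ≤ n) (i : ℕ) :
    ∑ k ∈ range (n + 1), coeff j (invRootSeries m * scaledDegLog m l ^ k) *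
        coeff k (degExp l 1 * ((degExp l m - 1) * C (1 / (m : ℝ))) ^ i) =
      if j = i then 1 else 0 := by
  rw [← coeff_X_pow, ← invRootSeries_mul_subst_whitney hl hm i,
    coeff_mul_subst_eq_sum constantCoeff_scaledDegLog _ _ hj]
  exact sum_congr rfl fun _ _ => mul_comm _ _

theorem sum_factorial_div_mul_dW (hl : l ≠ 0) (hm : 0 < m) {n j : ℕ} (hj : j ≤ n) (i : ℕ) :
    ∑ k ∈ range (n + 1),
        ((j ! : ℝ) / k ! * coeff j (invRootSeries m * scaledDegLog m l ^ k)) * dW m l k i =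
      if j = i then 1 else 0 := by
  calc _ = (j ! : ℝ) / i ! * ∑ k ∈ range (n + 1),
          coeff j (invRootSeries m * scaledDegLog m l ^ k) *
            coeff k (degExp l 1 * ((degExp l m - 1) * C (1 / (m : ℝ))) ^ i) := by
        rw [mul_sum]
        refine sum_congr rfl fun k _ => ?_
        rw [dW]
        field_simp
    _ = if j = i then 1 else 0 := by
        rw [sum_coeff_invRootSeries_mul_coeff_whitney hl hm hj]
        split_ifs with h
        · rw [h, mul_one, div_self (by positivity)]
        · rw [mul_zero]

theorem dW_eq_zero_of_lt {k i : ℕ} (h : k < i) : dW m l k i = 0 := by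
  have h0 : constantCoeff ((degExp l m - 1) * C (1 / (m : ℝ))) = 0 := by
    simp [degExp, dfall]
  rw [dW, coeff_mul_pow_eq_zero_of_lt h0 _ h, mul_zero]

theorem dDowling_eq_sum_range {k n : ℕ} (hk : k ≤ n) (x : ℝ) :
    dDowling m l k x = ∑ i ∈ range (n + 1), dW m l k i * dfall l x i := by
  refine sum_subset (range_subset_range.mpr (by omega)) fun i _ hi => ?_
  rw [dW_eq_zero_of_lt (by simpa using hi), zero_mul]

end Dowling

theorem stmt9_general (l : ℝ) (hl : l ≠ 0) (m : ℕ) (hm : 0 < m) (n : ℕ) (p : Polynomial ℝ)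
    (c : ℕ → ℝ)
    (hc : p = ∑ k ∈ range (n + 1), Polynomial.C (c k) * dfallPoly l k) (x : ℝ) :
    p.eval x =
      ∑ k ∈ range (n + 1),
        (1 / (k ! : ℝ) *
            ∑ j ∈ range (n + 1),
              (j ! : ℝ) *
                PowerSeries.coeff (R := ℝ) j
                  ((PowerSeries.mk fun i => dfall 1 (-(1 / (m : ℝ))) i * (m : ℝ) ^ i / i !) *
                    (PowerSeries.C (R := ℝ) (1 / m) *
                        PowerSeries.mk fun i =>
                          (m : ℝ) ^ i * PowerSeries.coeff (R := ℝ) i (degLog (l / m))) ^ k) *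
                c j) *
          dDowling m l k x := by
  rw [hc, Polynomial.eval_finsetSum]
  simp only [Polynomial.eval_mul, Polynomial.eval_C, dfallPoly_eval]
  rw [← sum_sum_mul_sum_eq_of_orthogonal _ _ _ _ _
    fun j hj i => sum_factorial_div_mul_dW hl hm (mem_range_succ_iff.mp hj) i]
  refine sum_congr rfl fun k hk => ?_
  rw [dDowling_eq_sum_range (mem_range_succ_iff.mp hk)]
  congr 1
  rw [mul_sum]
  refine sum_congr rfl fun j _ => ?_
  unfold invRootSeries scaledDegLog
  ring

theorem stmt9 (l : ℝ) (hl : l ≠ 0) (m : ℕ) (hm : 0 < m) (n : ℕ) (p : Polynomial ℝ)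
    (hp : p.natDegree ≤ n) (c : ℕ → ℝ)
    (hc : p = ∑ k ∈ range (n + 1), Polynomial.C (c k) * dfallPoly l k) (x : ℝ) :
    p.eval x =
      ∑ k ∈ range (n + 1),
        (1 / (k ! : ℝ) *
            ∑ j ∈ range (n + 1),
              (j ! : ℝ) *
                PowerSeries.coeff (R := ℝ) j
                  ((PowerSeries.mk fun i => dfall 1 (-(1 / (m : ℝ))) i * (m : ℝ) ^ i / i !) *
                    (PowerSeries.C (R := ℝ) (1 / m) *
                        PowerSeries.mk fun i =>
                          (m : ℝ) ^ i * PowerSeries.coeff (R := ℝ) i (degLog (l / m))) ^ k) *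
                c j) *
          dDowling m l k x :=
  stmt9_general l hl m hm n p c hc x
end
end
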